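/- arXiv:2106.10236 — 4 statements merged into one kernel-verified Lean document; each statement's English description precedes it below -/
import Mathlib

section
/- Suppose the real random variable L(X) satisfies the tail asymptotic lim_{u→∞} log P(L(X) > u) / Λ(u^{1/ρ}) = −I* with I* > 0, where Λ:(0,∞)→(0,∞) is eventually strictly increasing, Λ(x) → ∞, and Λ ∈ RV(α) for some α > 0. Then the value at risk v_β satisfies Λ(v_β^{1/ρ}) / log(1/β) → 1/I* as β → 0; equivalently, Λ(v_β^{1/ρ}) = −(1/I* + o(1)) log β. -/
open MeasureTheory Filter Real Topology ProbabilityTheory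

/-- A function `f : (0,∞) → (0,∞)` is regularly varying with index `p`. -/
def RegVary (f : ℝ → ℝ) (p : ℝ) : Prop :=
  ∀ x : ℝ, 0 < x → Tendsto (fun t => f (t * x) / f t) atTop (𝓝 (x ^ p))

/-- Value at risk at tail probability level `β` of the random variable `Z`. -/
noncomputable def VaR {Ω : Type*} [MeasurableSpace Ω] (μ : Measure Ω) (Z : Ω → ℝ) (β : ℝ) : ℝ :=
  sInf {u : ℝ | 1 - β ≤ (μ {ω | Z ω ≤ u}).toReal}

set_option maxHeartbeats 1000000

/-- under the tail asymptotic
`log P(L(X) > u) / Λ(u^{1/ρ}) → −I*`, the value at risk satisfies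
`Λ(v_β^{1/ρ}) / log(1/β) → 1/I*` as `β → 0`. -/
theorem stmt4
    {Ω : Type*} [MeasurableSpace Ω] (μ : Measure Ω) [IsProbabilityMeasure μ]
    (Z : Ω → ℝ) (hZ : Measurable Z)
    (hpos : ∀ u : ℝ, 0 < (μ {ω | u < Z ω}).toReal)
    (ρ α Istar : ℝ) (hρ : 0 < ρ) (hα : 0 < α) (hIstar : 0 < Istar)
    (Λ : ℝ → ℝ) (hΛpos : ∀ x : ℝ, 0 < x → 0 < Λ x)
    (hΛmono : ∃ x₀ : ℝ, StrictMonoOn Λ (Set.Ici x₀))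
    (hΛtop : Tendsto Λ atTop atTop)
    (hΛRV : RegVary Λ α)
    (htail : Tendsto (fun u : ℝ => Real.log ((μ {ω | u < Z ω}).toReal) / Λ (u ^ (1 / ρ)))
      atTop (𝓝 (-Istar))) :
    Tendsto (fun β : ℝ => Λ ((VaR μ Z β) ^ (1 / ρ)) / Real.log (1 / β))
      (𝓝[>] (0 : ℝ)) (𝓝 (1 / Istar)) := by
  classical
  set G : ℝ → ℝ := fun u => (μ {ω | u < Z ω}).toReal with hGdef
  have hGpos : ∀ u, 0 < G u := hpos
  have hGanti : Antitone G := by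
    intro a b hab
    exact ENNReal.toReal_mono (measure_ne_top μ _)
      (measure_mono fun ω h => lt_of_le_of_lt hab h)
  -- rewrite the VaR set
  have hset : ∀ β : ℝ, {u : ℝ | 1 - β ≤ (μ {ω | Z ω ≤ u}).toReal} = {u | G u ≤ β} := by
    intro β
    ext u
    have hm : MeasurableSet {ω | Z ω ≤ u} := hZ measurableSet_Iic
    have hcompl : {ω | Z ω ≤ u}ᶜ = {ω | u < Z ω} := by ext ω; simp [not_le]
    have h1 : μ {ω | Z ω ≤ u} + μ {ω | u < Z ω} = 1 := by
      rw [← hcompl, measure_add_measure_compl hm, measure_univ]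
    have hadd : (μ {ω | Z ω ≤ u}).toReal + G u = 1 := by
      have := congrArg ENNReal.toReal h1
      rwa [ENNReal.toReal_add (measure_ne_top μ _) (measure_ne_top μ _),
        ENNReal.toReal_one] at this
    simp only [Set.mem_setOf_eq]
    constructor <;> intro h <;> linarith
  have hVaR : ∀ β : ℝ, VaR μ Z β = sInf {u | G u ≤ β} := by
    intro β; rw [VaR, hset]
  -- asymptotics of G
  have hrpow : Tendsto (fun u : ℝ => u ^ (1 / ρ)) atTop atTop :=
    tendsto_rpow_atTop (by positivity)
  have hΛtop' : Tendsto (fun u : ℝ => Λ (u ^ (1 / ρ))) atTop atTop := hΛtop.comp hrpow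
  have hΛpos' : ∀ᶠ u : ℝ in atTop, 0 < Λ (u ^ (1 / ρ)) := hΛtop'.eventually_gt_atTop 0
  have hlogG : Tendsto (fun u => Real.log (G u)) atTop atBot := by
    have h1 : Tendsto (fun u => Real.log (G u) / Λ (u ^ (1 / ρ)) * Λ (u ^ (1 / ρ)))
        atTop atBot := htail.neg_mul_atTop (by linarith) hΛtop'
    refine Tendsto.congr' ?_ h1
    filter_upwards [hΛpos'] with u hu using div_mul_cancel₀ _ (ne_of_gt hu)
  have hG0 : Tendsto G atTop (𝓝 0) := by
    have := Real.tendsto_exp_atBot.comp hlogG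
    exact this.congr fun u => Real.exp_log (hGpos u)
  -- basic VaR facts
  have hSne : ∀ β : ℝ, 0 < β → {u | G u ≤ β}.Nonempty := by
    intro β hβ
    obtain ⟨u, hu⟩ := (hG0.eventually_lt_const hβ).exists
    exact ⟨u, le_of_lt hu⟩
  have hSbdd : ∀ β c : ℝ, β < G c → c ∈ lowerBounds {u | G u ≤ β} := by
    intro β c hc u hu
    by_contra h
    push_neg at h
    exact absurd (le_trans (hGanti h.le) hu) (not_le.2 hc)
  have hVaR_ge : ∀ β c : ℝ, 0 < β → β < G c → c ≤ VaR μ Z β := by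
    intro β c hβ hc
    rw [hVaR]
    exact le_csInf (hSne β hβ) (hSbdd β c hc)
  have hGlt : ∀ β c u : ℝ, β < G c → u < VaR μ Z β → β < G u := by
    intro β c u hc hu
    by_contra h
    push_neg at h
    rw [hVaR] at hu
    exact absurd (csInf_le ⟨c, hSbdd β c hc⟩ h) (not_le.2 hu)
  have hGVaR_le : ∀ β c : ℝ, 0 < β → β < G c → G (VaR μ Z β) ≤ β := by
    intro β c hβ hc
    set v := VaR μ Z β with hv
    have hvs : v = sInf {u | G u ≤ β} := hVaR β
    -- each approximation from the right
    have happrox : ∀ n : ℕ, G (v + 1 / (n + 1)) ≤ β := by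
      intro n
      have hlt : sInf {u | G u ≤ β} < v + 1 / (n + 1) := by
        rw [← hvs]
        have : (0:ℝ) < 1 / (n + 1) := by positivity
        linarith
      obtain ⟨u, hu, hult⟩ := exists_lt_of_csInf_lt (hSne β hβ) hlt
      exact le_trans (hGanti hult.le) hu
    -- continuity from below of the measure
    have hsets : {ω | v < Z ω} = ⋃ n : ℕ, {ω | v + 1 / (n + 1) < Z ω} := by
      ext ω
      simp only [Set.mem_setOf_eq, Set.mem_iUnion]
      constructor
      · intro h
        obtain ⟨n, hn⟩ := exists_nat_one_div_lt (sub_pos.2 h)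
        exact ⟨n, by linarith⟩
      · rintro ⟨n, hn⟩
        have : (0:ℝ) < 1 / (n + 1) := by positivity
        linarith
    have hmono : Monotone fun n : ℕ => {ω | v + 1 / (n + 1) < Z ω} := by
      intro n m hnm ω hω
      simp only [Set.mem_setOf_eq] at *
      have h1 : (1 : ℝ) / (m + 1) ≤ 1 / (n + 1) := by
        apply one_div_le_one_div_of_le (by positivity)
        exact_mod_cast by omega
      linarith
    have htends : Tendsto (fun n : ℕ => G (v + 1 / (n + 1))) atTop (𝓝 (G v)) := by
      have h1 := tendsto_measure_iUnion_atTop (μ := μ) hmono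
      rw [← hsets] at h1
      have h2 := (ENNReal.tendsto_toReal (measure_ne_top μ {ω | v < Z ω})).comp h1
      exact h2
    exact le_of_tendsto' htends happrox
  -- VaR tends to infinity as β → 0⁺
  have hVtop : Tendsto (fun β => VaR μ Z β) (𝓝[>] (0:ℝ)) atTop := by
    rw [tendsto_atTop]
    intro c
    have h1 : ∀ᶠ β in 𝓝[>] (0:ℝ), β < G c :=
      ((tendsto_id (α := ℝ)).eventually_lt_const (hGpos c)).filter_mono nhdsWithin_le_nhds
    filter_upwards [h1, self_mem_nhdsWithin] with β hβc hβ
    exact hVaR_ge β c hβ hβc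
  have hbase : ∀ᶠ β in 𝓝[>] (0:ℝ), 0 < β ∧ β < 1 ∧ β < G 0 := by
    have h1 : ∀ᶠ β in 𝓝[>] (0:ℝ), β < 1 :=
      ((tendsto_id (α := ℝ)).eventually_lt_const one_pos).filter_mono nhdsWithin_le_nhds
    have h2 : ∀ᶠ β in 𝓝[>] (0:ℝ), β < G 0 :=
      ((tendsto_id (α := ℝ)).eventually_lt_const (hGpos 0)).filter_mono nhdsWithin_le_nhds
    filter_upwards [h1, h2, self_mem_nhdsWithin] with β hβ1 hβG hβ
    exact ⟨hβ, hβ1, hβG⟩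
  refine tendsto_order.2 ⟨?_, ?_⟩
  · -- lower bound
    intro a ha
    obtain ⟨K, hK1, hK2⟩ : ∃ K : ℝ, Istar < K ∧ a < 1 / K := by
      rcases le_or_gt a 0 with h | h
      · exact ⟨Istar + 1, by linarith, lt_of_le_of_lt h (by positivity)⟩
      · have hai : Istar < 1 / a := by
          rw [lt_div_iff₀ h]
          nlinarith [mul_lt_mul_of_pos_right ha hIstar,
            one_div_mul_cancel (ne_of_gt hIstar)]
        refine ⟨(Istar + 1 / a) / 2, by linarith, ?_⟩
        have hd : 0 < (Istar + 1 / a) / 2 := by positivity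
        rw [lt_div_iff₀ hd]
        nlinarith [mul_lt_mul_of_pos_left (show (Istar + 1 / a) / 2 < 1 / a by linarith) h,
          one_div_mul_cancel (ne_of_gt h)]
    have hK0 : 0 < K := lt_trans hIstar hK1
    have h_up : ∀ᶠ u : ℝ in atTop, -K * Λ (u ^ (1 / ρ)) ≤ Real.log (G u) := by
      have h1 : ∀ᶠ u : ℝ in atTop,
          -K < Real.log (G u) / Λ (u ^ (1 / ρ)) :=
        htail.eventually_const_lt (by linarith)
      filter_upwards [h1, hΛpos'] with u hu hΛu
      exact le_of_lt ((lt_div_iff₀ hΛu).1 hu)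
    filter_upwards [hbase, hVtop.eventually (h_up.and (eventually_ge_atTop 1))]
      with β ⟨hβ0, hβ1, hβG⟩ ⟨hvtail, hv1⟩
    set v := VaR μ Z β with hv
    have hGv : G v ≤ β := hGVaR_le β 0 hβ0 hβG
    have hlog1 : Real.log (G v) ≤ Real.log β :=
      (Real.log_le_log_iff (hGpos v) hβ0).2 hGv
    have hL : Real.log (1 / β) = -Real.log β := by
      rw [one_div, Real.log_inv]
    have hLpos : 0 < Real.log (1 / β) := by
      rw [hL]; linarith [Real.log_neg hβ0 hβ1]
    have hchain : Real.log (1 / β) ≤ K * Λ (v ^ (1 / ρ)) := by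
      rw [hL]; nlinarith [hvtail, hlog1]
    have hfinal : 1 / K ≤ Λ (v ^ (1 / ρ)) / Real.log (1 / β) := by
      rw [div_le_div_iff₀ hK0 hLpos]
      nlinarith
    exact lt_of_lt_of_le hK2 hfinal
  · -- upper bound
    intro b hb
    have hb0 : 0 < b := lt_trans (by positivity) hb
    have h1b : 1 / b < Istar := by
      rw [div_lt_iff₀ hb0]
      have := (div_lt_iff₀ hIstar).1 hb
      linarith [mul_comm b Istar]
    set K : ℝ := (1 / b + Istar) / 2 with hKdef
    have hKlt : K < Istar := by rw [hKdef]; linarith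
    have hKgt : 1 / b < K := by rw [hKdef]; linarith
    have hK0 : 0 < K := lt_trans (by positivity) hKgt
    have hbK : 1 < b * K := by
      have := (div_lt_iff₀ hb0).1 hKgt
      linarith [mul_comm K b]
    set θ : ℝ := 1 / (b * K) with hθdef
    have hθ1 : θ < 1 := by
      rw [hθdef, div_lt_one (by linarith)]; linarith
    have hθ0 : 0 < θ := by rw [hθdef]; positivity
    set c : ℝ := (θ + 1) / 2 with hcdef
    have hc0 : 0 < c := by rw [hcdef]; linarith
    have hc1 : c < 1 := by rw [hcdef]; linarith
    have hcθ : θ < c := by rw [hcdef]; linarith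
    set r : ℝ := ((c + 1) / 2) ^ (1 / α) with hrdef
    have hmid0 : 0 < (c + 1) / 2 := by linarith
    have hmid1 : (c + 1) / 2 < 1 := by linarith
    have hr0 : 0 < r := Real.rpow_pos_of_pos hmid0 _
    have hr1 : r < 1 := Real.rpow_lt_one (le_of_lt hmid0) hmid1 (by positivity)
    have hrα : r ^ α = (c + 1) / 2 := by
      rw [hrdef, ← Real.rpow_mul (le_of_lt hmid0), one_div,
        inv_mul_cancel₀ (ne_of_gt hα), Real.rpow_one]
    have hcrα : c < r ^ α := by rw [hrα]; linarith
    -- regular variation consequence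
    have hRV : ∀ᶠ u : ℝ in atTop, c * Λ (u ^ (1 / ρ)) < Λ (u ^ (1 / ρ) * r) := by
      have h1 : ∀ᶠ t : ℝ in atTop, c < Λ (t * r) / Λ t :=
        (hΛRV r hr0).eventually_const_lt hcrα
      have h2 : ∀ᶠ t : ℝ in atTop, 0 < Λ t := hΛtop.eventually_gt_atTop 0
      have h3 : ∀ᶠ t : ℝ in atTop, c * Λ t < Λ (t * r) := by
        filter_upwards [h1, h2] with t ht hΛt
        exact (lt_div_iff₀ hΛt).1 ht
      exact hrpow.eventually h3
    -- tail consequence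
    have h_dn : ∀ᶠ u : ℝ in atTop, Real.log (G u) < -K * Λ (u ^ (1 / ρ)) := by
      have h1 : ∀ᶠ u : ℝ in atTop,
          Real.log (G u) / Λ (u ^ (1 / ρ)) < -K :=
        htail.eventually_lt_const (by linarith)
      filter_upwards [h1, hΛpos'] with u hu hΛu
      exact (div_lt_iff₀ hΛu).1 hu
    set s : ℝ := r ^ ρ with hsdef
    have hs0 : 0 < s := Real.rpow_pos_of_pos hr0 _
    have hs1 : s < 1 := Real.rpow_lt_one (le_of_lt hr0) hr1 hρ
    -- scaling identity
    have hscale : ∀ u : ℝ, 0 < u → (s * u) ^ (1 / ρ) = u ^ (1 / ρ) * r := by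
      intro u hu
      rw [hsdef, Real.mul_rpow (le_of_lt (Real.rpow_pos_of_pos hr0 ρ)) (le_of_lt hu),
        ← Real.rpow_mul (le_of_lt hr0), mul_one_div_cancel (ne_of_gt hρ), Real.rpow_one]
      ring
    -- eventual threshold for the tail bound applied at s * u
    obtain ⟨T, hT⟩ := (h_dn.and (eventually_gt_atTop 0)).exists_forall_of_atTop
    have hvcond : ∀ᶠ u : ℝ in atTop,
        1 ≤ u ∧ c * Λ (u ^ (1 / ρ)) < Λ (u ^ (1 / ρ) * r) ∧ T ≤ s * u := by
      have h1 : Tendsto (fun u : ℝ => s * u) atTop atTop :=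
        (tendsto_id (α := ℝ)).const_mul_atTop hs0
      filter_upwards [eventually_ge_atTop 1, hRV, h1.eventually (eventually_ge_atTop T)]
        with u h1 h2 h3
      exact ⟨h1, h2, h3⟩
    filter_upwards [hbase, hVtop.eventually hvcond]
      with β ⟨hβ0, hβ1, hβG⟩ ⟨hv1, hvrv, hvT⟩
    set v := VaR μ Z β with hv
    have hv0 : 0 < v := lt_of_lt_of_le one_pos hv1
    have hsv : s * v < v := by nlinarith
    have hβlt : β < G (s * v) := hGlt β 0 (s * v) hβG hsv
    have hlog1 : Real.log β < Real.log (G (s * v)) := Real.log_lt_log hβ0 hβlt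
    have htl := (hT (s * v) hvT).1
    rw [hscale v hv0] at htl
    have hΛw : 0 < Λ (v ^ (1 / ρ)) := hΛpos _ (Real.rpow_pos_of_pos hv0 _)
    have hchain : Real.log β < -(K * c) * Λ (v ^ (1 / ρ)) := by
      nlinarith [hvrv]
    have hL : Real.log (1 / β) = -Real.log β := by rw [one_div, Real.log_inv]
    have hLgt : K * c * Λ (v ^ (1 / ρ)) < Real.log (1 / β) := by
      rw [hL]; linarith
    have hKc : 0 < K * c := by positivity
    have hLpos : 0 < Real.log (1 / β) := lt_trans (by positivity) hLgt
    have hfb : Λ (v ^ (1 / ρ)) / Real.log (1 / β) < 1 / (K * c) := by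
      rw [div_lt_div_iff₀ hLpos hKc]
      nlinarith
    have hKcb : 1 / (K * c) < b := by
      rw [div_lt_iff₀ hKc]
      have h1 : K * θ = 1 / b := by
        rw [hθdef, mul_one_div, mul_comm b K, ← div_div, div_self (ne_of_gt hK0)]
      have hKcgt : 1 / b < K * c := by
        rw [← h1]; exact mul_lt_mul_of_pos_left hcθ hK0
      have := (div_lt_iff₀ hb0).1 hKcgt
      nlinarith
    exact lt_trans hfb hKcb
end

section
/- Suppose the real random variable L(X) satisfies the tail asymptotic lim_{u→∞} log P(L(X) > u) / Λ(u^{1/ρ}) = −I* with I* > 0, where Λ:(0,∞)→(0,∞) is eventually strictly increasing, Λ(x) → ∞, and Λ ∈ RV(α) for some α > 0. Then for every δ > 0 there exists β_0 > 0 such that E[((L(X) − v_β)^+)²] ≥ β^{1+δ} for all β ∈ (0, β_0). In particular, E[((L(X) − v_β)^+)²] ≥ P(L(X) ≥ v_β + 1), and the latter equals β^{1+o(1)} as β → 0. -/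
/-!
Write `T u = P(L > u)`. Since `Λ` is regularly varying and eventually monotone,
`Λ((u + 1)^{1/ρ}) / Λ((u - 1)^{1/ρ}) → 1`, so the tail asymptotic gives
`log T (u + 1) / log T (u - 1) → 1`. By definition of the quantile, `T (v_β - 1) > β` and
`P(L ≥ v_β + 1) ≤ β`, while `v_β → ∞` as `β → 0`; hence
`β ^ (1 + δ) ≤ P(L ≥ v_β + 1) ≤ β` for small `β`. The excess `((L - v)^+)²` dominates the
indicator of `{L ≥ v + 1}`, and it is integrable because a doubling argument makes `Λ` grow at
least like a positive power, so that `T` decays faster than any power.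
-/

open MeasureTheory Filter Real Topology ProbabilityTheory

lemma exists_rpow_le_of_doubling {f : ℝ → ℝ} {x₀ a γ : ℝ} (hγ : 0 ≤ γ)
    (hpos : ∀ x, 0 < x → 0 < f x) (hmono : MonotoneOn f (Set.Ici x₀))
    (hdouble : ∀ t, a ≤ t → 2 ^ γ * f t ≤ f (t * 2)) :
    ∃ c > 0, ∀ᶠ t in atTop, c * t ^ γ ≤ f t := by
  set t₀ := max (max x₀ a) 1
  have ht₀ : 0 < t₀ := lt_of_lt_of_le one_pos (le_max_right _ _)
  have hx₀ : x₀ ≤ t₀ := (le_max_left _ _).trans (le_max_left _ _)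
  have ha : a ≤ t₀ := (le_max_right _ _).trans (le_max_left _ _)
  set c := f t₀ / (2 * t₀) ^ γ
  have hc : 0 < c := div_pos (hpos t₀ ht₀) (by positivity)
  refine ⟨c, hc, eventually_atTop.2 ⟨t₀, fun t ht => ?_⟩⟩
  -- induction over the dyadic ranges `[t₀, 2 ^ n t₀)`; `hdouble` passes from `t / 2` to `t`
  suffices key : ∀ n : ℕ, ∀ t, t₀ ≤ t → t < 2 ^ n * t₀ → c * t ^ γ ≤ f t by
    obtain ⟨n, hn⟩ := pow_unbounded_of_one_lt (t / t₀) one_lt_two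
    exact key n t ht ((div_lt_iff₀ ht₀).1 hn)
  intro n
  induction n with
  | zero => intro t ht ht'; rw [pow_zero, one_mul] at ht'; linarith
  | succ n ih =>
    intro t ht ht'
    by_cases hsmall : t < 2 * t₀
    · calc c * t ^ γ ≤ c * (2 * t₀) ^ γ := by gcongr; linarith
        _ = f t₀ := div_mul_cancel₀ _ (by positivity)
        _ ≤ f t := hmono (Set.mem_Ici.2 hx₀) (Set.mem_Ici.2 (hx₀.trans ht)) ht
    · have hhalf : t₀ ≤ t / 2 := by linarith
      calc c * t ^ γ = 2 ^ γ * (c * (t / 2) ^ γ) := by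
            rw [div_rpow (by linarith) zero_le_two]; field_simp
        _ ≤ 2 ^ γ * f (t / 2) := by
            gcongr; exact ih _ hhalf (by rw [pow_succ] at ht'; linarith)
        _ ≤ f (t / 2 * 2) := hdouble _ (ha.trans hhalf)
        _ = f t := by rw [div_mul_cancel₀ _ two_ne_zero]

lemma RegVary.exists_rpow_le {f : ℝ → ℝ} {α γ x₀ : ℝ} (hf : RegVary f α) (hγ : 0 ≤ γ)
    (hγα : γ < α) (hpos : ∀ x, 0 < x → 0 < f x) (hmono : MonotoneOn f (Set.Ici x₀)) :
    ∃ c > 0, ∀ᶠ t in atTop, c * t ^ γ ≤ f t := by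
  have hlt : (2 : ℝ) ^ γ < 2 ^ α := rpow_lt_rpow_of_exponent_lt one_lt_two hγα
  obtain ⟨a, ha⟩ := eventually_atTop.1 <|
    ((hf 2 two_pos).eventually (eventually_gt_nhds hlt)).and (eventually_gt_atTop 0)
  refine exists_rpow_le_of_doubling hγ hpos hmono (a := a) fun t ht => ?_
  obtain ⟨h2, h0⟩ := ha t ht
  exact (lt_div_iff₀ (hpos t h0)).1 h2 |>.le

lemma RegVary.tendsto_div_of_le_of_le_mul {ι : Type*} {l : Filter ι} {f : ℝ → ℝ} {α x₀ : ℝ}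
    (hf : RegVary f α) (hα : 0 < α) (hpos : ∀ x, 0 < x → 0 < f x)
    (hmono : MonotoneOn f (Set.Ici x₀)) {a b : ι → ℝ} (hb : Tendsto b l atTop)
    (hba : ∀ᶠ i in l, b i ≤ a i) (hab : ∀ c > 1, ∀ᶠ i in l, a i ≤ c * b i) :
    Tendsto (fun i => f (a i) / f (b i)) l (𝓝 1) := by
  have hb_large : ∀ᶠ i in l, x₀ ≤ b i ∧ 0 < b i :=
    (hb.eventually_ge_atTop x₀).and (hb.eventually_gt_atTop 0)
  refine tendsto_order.2 ⟨fun r hr => ?_, fun r hr => ?_⟩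
  · filter_upwards [hba, hb_large] with i hi ⟨hx, h0⟩
    rw [lt_div_iff₀ (hpos _ h0)]
    calc r * f (b i) < 1 * f (b i) := by gcongr; exact hpos _ h0
      _ ≤ f (a i) := by rw [one_mul]; exact hmono hx (hx.trans hi) hi
  · -- compare with the scale `c`, chosen so that `c ^ α` lies strictly between `1` and `r`
    set c := ((1 + r) / 2) ^ α⁻¹
    have hc : 1 < c := one_lt_rpow (by linarith) (inv_pos.2 hα)
    have hcα : c ^ α = (1 + r) / 2 := by
      rw [← rpow_mul (by linarith), inv_mul_cancel₀ hα.ne', rpow_one]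
    have hscale : ∀ᶠ i in l, f (b i * c) / f (b i) < r :=
      hb.eventually ((hf c (by linarith)).eventually_lt_const (by rw [hcα]; linarith))
    filter_upwards [hba, hab c hc, hb_large, hscale] with i hi hic ⟨hx, h0⟩ hr'
    refine lt_of_le_of_lt ?_ hr'
    gcongr
    · exact (hpos _ h0).le
    · exact hmono (hx.trans hi) (hx.trans (hi.trans (by linarith))) (by linarith)

lemma RegVary.tendsto_div_rpow_add_one_rpow_sub_one {f : ℝ → ℝ} {α ρ x₀ : ℝ}
    (hf : RegVary f α) (hα : 0 < α) (hρ : 0 < ρ) (hpos : ∀ x, 0 < x → 0 < f x)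
    (hmono : MonotoneOn f (Set.Ici x₀)) :
    Tendsto (fun u : ℝ => f ((u + 1) ^ (1 / ρ)) / f ((u - 1) ^ (1 / ρ))) atTop (𝓝 1) := by
  refine hf.tendsto_div_of_le_of_le_mul hα hpos hmono ((tendsto_rpow_atTop (by positivity)).comp
    (tendsto_atTop_add_const_right _ (-1) tendsto_id)) ?_ fun c hc => ?_
  · filter_upwards [eventually_gt_atTop 1] with u hu
    exact rpow_le_rpow (by linarith) (by linarith) (by positivity)
  · have hcρ : 1 < c ^ ρ := one_lt_rpow hc hρ
    filter_upwards [eventually_ge_atTop ((c ^ ρ + 1) / (c ^ ρ - 1)), eventually_gt_atTop 1]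
      with u hu hu1
    rw [div_le_iff₀ (by linarith)] at hu
    calc (u + 1) ^ (1 / ρ) ≤ (c ^ ρ * (u - 1)) ^ (1 / ρ) :=
          rpow_le_rpow (by linarith) (by nlinarith) (by positivity)
      _ = c * (u - 1) ^ (1 / ρ) := by
          rw [mul_rpow (by positivity) (by linarith), one_div,
            rpow_rpow_inv (by linarith) hρ.ne']

lemma eventually_le_rpow_neg_of_tendsto_log_div {T Λ : ℝ → ℝ} {ρ I c γ : ℝ} (hρ : 0 < ρ)
    (hI : 0 < I) (hc : 0 < c) (hγ : 0 < γ) (hT : ∀ u, 0 < T u)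
    (hΛ : ∀ᶠ t in atTop, c * t ^ γ ≤ Λ t)
    (htail : Tendsto (fun u => log (T u) / Λ (u ^ (1 / ρ))) atTop (𝓝 (-I))) (q : ℝ) :
    ∀ᶠ u in atTop, T u ≤ u ^ (-q) := by
  have hΛρ : ∀ᶠ u in atTop, c * u ^ (γ / ρ) ≤ Λ (u ^ (1 / ρ)) := by
    filter_upwards [(tendsto_rpow_atTop (by positivity : 0 < 1 / ρ)).eventually hΛ,
      eventually_gt_atTop 0] with u hu hu0
    rwa [← rpow_mul hu0.le, one_div_mul_eq_div] at hu
  have hlog : ∀ᶠ u in atTop, ‖q * log u‖ ≤ I / 2 * c * ‖u ^ (γ / ρ)‖ :=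
    ((isLittleO_log_rpow_atTop (by positivity)).const_mul_left q).bound (by positivity)
  filter_upwards [htail.eventually_lt_const (by linarith : -I < -(I / 2)), hΛρ, hlog,
    eventually_gt_atTop 0] with u htu hΛu hlogu hu
  have hΛpos : 0 < Λ (u ^ (1 / ρ)) := lt_of_lt_of_le (by positivity) hΛu
  rw [div_lt_iff₀ hΛpos] at htu
  rw [norm_of_nonneg (by positivity : 0 ≤ u ^ (γ / ρ))] at hlogu
  have hq : q * log u ≤ I / 2 * c * u ^ (γ / ρ) := (le_norm_self _).trans hlogu
  rw [← log_le_log_iff (hT u) (by positivity), log_rpow hu]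
  nlinarith

lemma eventually_one_add_mul_log_le_log_shift {T Λ : ℝ → ℝ} {ρ α I x₀ δ : ℝ} (hρ : 0 < ρ)
    (hα : 0 < α) (hI : 0 < I) (hΛpos : ∀ x, 0 < x → 0 < Λ x) (hmono : MonotoneOn Λ (Set.Ici x₀))
    (hΛ : RegVary Λ α) (htail : Tendsto (fun u => log (T u) / Λ (u ^ (1 / ρ))) atTop (𝓝 (-I)))
    (hδ : 0 < δ) :
    ∀ᶠ u in atTop, (1 + δ) * log (T (u - 1)) ≤ log (T (u + 1)) := by
  have hplus : Tendsto (fun u : ℝ => u + 1) atTop atTop :=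
    tendsto_atTop_add_const_right _ 1 tendsto_id
  have hminus : Tendsto (fun u : ℝ => u - 1) atTop atTop :=
    tendsto_atTop_add_const_right _ (-1) tendsto_id
  have hscale := hΛ.tendsto_div_rpow_add_one_rpow_sub_one hα hρ hΛpos hmono
  have hΛpos' : ∀ u : ℝ, 1 < u → 0 < Λ ((u - 1) ^ (1 / ρ)) ∧ 0 < Λ ((u + 1) ^ (1 / ρ)) :=
    fun u hu => ⟨hΛpos _ (rpow_pos_of_pos (by linarith) _),
      hΛpos _ (rpow_pos_of_pos (by linarith) _)⟩
  have hneg : ∀ᶠ u in atTop, log (T (u - 1)) < 0 := by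
    filter_upwards [(htail.comp hminus).eventually_lt_const (neg_neg_of_pos hI),
      eventually_gt_atTop 1] with u hu hu1
    rwa [Function.comp_apply, div_lt_iff₀ (hΛpos' u hu1).1, zero_mul] at hu
  have hratio : Tendsto (fun u => log (T (u + 1)) / log (T (u - 1))) atTop (𝓝 1) := by
    have := ((htail.comp hplus).mul hscale).div (htail.comp hminus) (neg_ne_zero.2 hI.ne')
    rw [mul_one, div_self (neg_ne_zero.2 hI.ne')] at this
    refine this.congr' ?_
    filter_upwards [hneg, eventually_gt_atTop 1] with u hu hu1
    obtain ⟨h₁, h₂⟩ := hΛpos' u hu1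
    simp only [Pi.div_apply, Function.comp_apply]
    field_simp
  filter_upwards [hratio.eventually_lt_const (by linarith : (1 : ℝ) < 1 + δ), hneg] with u h₁ h₂
  rw [div_lt_iff_of_neg h₂] at h₁
  linarith

section Integrability

variable {α : Type*} [MeasurableSpace α] {μ : Measure α} [IsFiniteMeasure μ]

lemma integrable_of_measureReal_lt_le {f : α → ℝ} {g : ℝ → ℝ} {t₀ : ℝ} (hf_nn : 0 ≤ f)
    (hf : Measurable f) (ht₀ : 0 ≤ t₀) (hg : IntegrableOn g (Set.Ioi t₀))
    (hfg : ∀ t, t₀ < t → μ.real {ω | t < f ω} ≤ g t) : Integrable f μ := by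
  refine ⟨hf.aestronglyMeasurable, ?_⟩
  rw [hasFiniteIntegral_iff_ofReal (ae_of_all _ hf_nn),
    lintegral_eq_lintegral_meas_lt μ (ae_of_all _ hf_nn) hf.aemeasurable,
    ← Set.Ioc_union_Ioi_eq_Ioi ht₀,
    lintegral_union measurableSet_Ioi (Set.Ioc_disjoint_Ioi le_rfl)]
  refine ENNReal.add_lt_top.2 ⟨?_, ?_⟩
  · calc ∫⁻ t in Set.Ioc 0 t₀, μ {ω | t < f ω} ≤ ∫⁻ _ in Set.Ioc 0 t₀, μ Set.univ :=
          lintegral_mono fun _ => measure_mono (Set.subset_univ _)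
      _ < ⊤ := by
          rw [setLIntegral_const]
          exact ENNReal.mul_lt_top (measure_lt_top _ _) (by simp)
  · calc ∫⁻ t in Set.Ioi t₀, μ {ω | t < f ω} ≤ ∫⁻ t in Set.Ioi t₀, ENNReal.ofReal (g t) :=
          setLIntegral_mono' measurableSet_Ioi fun t ht => by
            rw [← ofReal_measureReal]; exact ENNReal.ofReal_le_ofReal (hfg t ht)
      _ < ⊤ := hg.lintegral_lt_top

lemma integrable_sq_max_sub_of_tail_le {X : α → ℝ} (hX : Measurable X)
    (htail : ∀ᶠ u in atTop, μ.real {ω | u < X ω} ≤ u ^ (-3 : ℝ)) (v : ℝ) :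
    Integrable (fun ω => (max (X ω - v) 0) ^ 2) μ := by
  obtain ⟨u₁, hu₁⟩ := eventually_atTop.1 (htail.and (eventually_gt_atTop 0))
  have hu₁0 : 0 < u₁ := (hu₁ u₁ le_rfl).2
  have hpos_sq : Integrable (fun ω => (max (X ω) 0) ^ 2) μ := by
    refine integrable_of_measureReal_lt_le (fun ω => sq_nonneg _) (by fun_prop) (sq_nonneg u₁)
      (integrableOn_Ioi_rpow_of_lt (by norm_num : (-3 / 2 : ℝ) < -1) (by positivity))
      fun t ht => ?_
    have ht0 : 0 < t := lt_trans (by positivity) ht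
    have hsqrt : u₁ ≤ √t := by
      rw [← sqrt_sq hu₁0.le]; exact sqrt_le_sqrt ht.le
    have hset : {ω | t < max (X ω) 0 ^ 2} = {ω | √t < X ω} := by
      ext ω
      rw [Set.mem_ofPred_eq, Set.mem_ofPred_eq, ← sqrt_lt_sqrt_iff ht0.le,
        sqrt_sq (le_max_right _ _), lt_max_iff, or_iff_left (sqrt_nonneg t).not_gt]
    calc μ.real {ω | t < max (X ω) 0 ^ 2} ≤ √t ^ (-3 : ℝ) := hset ▸ (hu₁ _ hsqrt).1
      _ = t ^ (-3 / 2 : ℝ) := by rw [sqrt_eq_rpow, ← rpow_mul ht0.le]; norm_num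
  have hmem : MemLp (fun ω => max (X ω - v) 0) 2 μ := by
    refine (((memLp_two_iff_integrable_sq (by fun_prop)).2 hpos_sq).add (memLp_const |v|)).of_le
      (by fun_prop) (ae_of_all _ fun ω => ?_)
    rw [Pi.add_apply, norm_of_nonneg (le_max_right _ _),
      norm_of_nonneg (add_nonneg (le_max_right _ _) (abs_nonneg v))]
    exact max_le (by linarith [le_max_left (X ω) 0, neg_abs_le v]) (by positivity)
  exact hmem.integrable_sq

lemma measureReal_add_one_le_integral_sq {X : α → ℝ} (hX : Measurable X) {v : ℝ}
    (hint : Integrable (fun ω => (max (X ω - v) 0) ^ 2) μ) :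
    μ.real {ω | v + 1 ≤ X ω} ≤ ∫ ω, (max (X ω - v) 0) ^ 2 ∂μ := by
  have hs : MeasurableSet {ω | v + 1 ≤ X ω} := measurableSet_le measurable_const hX
  rw [← integral_indicator_one hs]
  refine integral_mono ((integrable_const 1).indicator hs) hint fun ω => ?_
  by_cases h : v + 1 ≤ X ω
  · rw [Set.indicator_of_mem (show ω ∈ {ω | v + 1 ≤ X ω} from h), Pi.one_apply]
    exact one_le_pow₀ (le_max_of_le_left (by linarith))
  · rw [Set.indicator_of_notMem (show ω ∉ {ω | v + 1 ≤ X ω} from h)]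
    positivity

end Integrability

section ValueAtRisk

variable {Ω : Type*} [MeasurableSpace Ω] {μ : Measure Ω} [IsProbabilityMeasure μ] {Z : Ω → ℝ}
  {β u : ℝ}

lemma measureReal_le_eq_cdf (hZ : Measurable Z) (u : ℝ) :
    μ.real {ω | Z ω ≤ u} = cdf (μ.map Z) u := by
  have := Measure.isProbabilityMeasure_map (μ := μ) hZ.aemeasurable
  rw [cdf_eq_real, map_measureReal_apply hZ measurableSet_Iic]
  rfl

lemma measureReal_lt_eq_one_sub_cdf (hZ : Measurable Z) (u : ℝ) :
    μ.real {ω | u < Z ω} = 1 - cdf (μ.map Z) u := by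
  rw [← measureReal_le_eq_cdf hZ,
    ← probReal_compl_eq_one_sub (measurableSet_le hZ measurable_const)]
  simp only [Set.compl_ofPred, not_le]

lemma VaR_eq_sInf_cdf (hZ : Measurable Z) (β : ℝ) :
    VaR μ Z β = sInf {u | 1 - β ≤ cdf (μ.map Z) u} := by
  simp_rw [VaR, ← measureReal_def, measureReal_le_eq_cdf hZ]

lemma nonempty_setOf_le_cdf (ν : Measure ℝ) [IsProbabilityMeasure ν] (hβ : 0 < β) :
    {u | 1 - β ≤ cdf ν u}.Nonempty :=
  ((tendsto_cdf_atTop ν).eventually_const_le (by linarith : 1 - β < 1)).exists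

lemma bddBelow_setOf_le_cdf (ν : Measure ℝ) [IsProbabilityMeasure ν] (hβ : β < 1) :
    BddBelow {u | 1 - β ≤ cdf ν u} := by
  obtain ⟨M, hM⟩ := ((tendsto_cdf_atBot ν).eventually_lt_const (by linarith : 0 < 1 - β)).exists
  exact ⟨M, fun s hs => ((monotone_cdf ν).reflect_lt (hM.trans_le hs)).le⟩

lemma lt_measureReal_of_lt_VaR (hZ : Measurable Z) (hβ : β < 1) (h : u < VaR μ Z β) :
    β < μ.real {ω | u < Z ω} := by
  have := Measure.isProbabilityMeasure_map (μ := μ) hZ.aemeasurable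
  rw [VaR_eq_sInf_cdf hZ] at h
  rw [measureReal_lt_eq_one_sub_cdf hZ]
  by_contra h'
  exact h.not_ge <|
    csInf_le (bddBelow_setOf_le_cdf _ hβ) (by simp only [Set.mem_ofPred_eq]; linarith)

lemma measureReal_le_of_VaR_lt (hZ : Measurable Z) (hβ : 0 < β) (h : VaR μ Z β < u) :
    μ.real {ω | u < Z ω} ≤ β := by
  have := Measure.isProbabilityMeasure_map (μ := μ) hZ.aemeasurable
  rw [VaR_eq_sInf_cdf hZ] at h
  obtain ⟨s, hs, hsu⟩ := exists_lt_of_csInf_lt (nonempty_setOf_le_cdf _ hβ) h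
  rw [measureReal_lt_eq_one_sub_cdf hZ]
  linarith [hs.out.trans (monotone_cdf _ hsu.le)]

lemma le_VaR_of_lt_measureReal (hZ : Measurable Z) (hβ : 0 < β) (h : β < μ.real {ω | u < Z ω}) :
    u ≤ VaR μ Z β := by
  have := Measure.isProbabilityMeasure_map (μ := μ) hZ.aemeasurable
  rw [VaR_eq_sInf_cdf hZ]
  rw [measureReal_lt_eq_one_sub_cdf hZ] at h
  exact le_csInf (nonempty_setOf_le_cdf _ hβ) fun s hs =>
    ((monotone_cdf _).reflect_lt (by linarith [hs.out] : cdf (μ.map Z) u < cdf (μ.map Z) s)).le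

lemma tendsto_VaR_nhdsGT_zero (hZ : Measurable Z) (hpos : ∀ u, 0 < μ.real {ω | u < Z ω}) :
    Tendsto (VaR μ Z) (𝓝[>] 0) atTop :=
  tendsto_atTop.2 fun M => by
    filter_upwards [Ioo_mem_nhdsGT (hpos M)] with β hβ
    exact le_VaR_of_lt_measureReal hZ hβ.1 hβ.2

lemma measureReal_VaR_add_le (hZ : Measurable Z) (hβ : 0 < β) {ε : ℝ} (hε : 0 < ε) :
    μ.real {ω | VaR μ Z β + ε ≤ Z ω} ≤ β := by
  refine (measureReal_mono fun ω (hω : VaR μ Z β + ε ≤ Z ω) => ?_).trans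
    (measureReal_le_of_VaR_lt hZ hβ (by linarith : VaR μ Z β < VaR μ Z β + ε / 2))
  show VaR μ Z β + ε / 2 < Z ω
  linarith

lemma eventually_rpow_le_measureReal_VaR_add_one (hZ : Measurable Z)
    (hpos : ∀ u, 0 < μ.real {ω | u < Z ω}) {δ : ℝ} (hδ : 0 < δ)
    (hshift : ∀ᶠ u in atTop,
      (1 + δ) * log (μ.real {ω | u - 1 < Z ω}) ≤ log (μ.real {ω | u + 1 < Z ω})) :
    ∀ᶠ β in 𝓝[>] 0, β ^ (1 + δ) ≤ μ.real {ω | VaR μ Z β + 1 ≤ Z ω} := by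
  filter_upwards [(tendsto_VaR_nhdsGT_zero hZ hpos).eventually hshift, Ioo_mem_nhdsGT one_pos]
    with β hβshift ⟨h0, h1⟩
  have hβ : β < μ.real {ω | VaR μ Z β - 1 < Z ω} :=
    lt_measureReal_of_lt_VaR hZ h1 (by linarith)
  calc β ^ (1 + δ) ≤ μ.real {ω | VaR μ Z β + 1 < Z ω} := by
        rw [← log_le_log_iff (by positivity) (hpos _), log_rpow h0]
        exact (mul_le_mul_of_nonneg_left (log_le_log h0 hβ.le) (by linarith)).trans hβshift
    _ ≤ μ.real {ω | VaR μ Z β + 1 ≤ Z ω} :=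
        measureReal_mono (Set.ofPred_subset_ofPred.2 fun _ => le_of_lt)

end ValueAtRisk

lemma tendsto_log_div_log_of_rpow_le {P : ℝ → ℝ} (hle : ∀ᶠ β in 𝓝[>] 0, P β ≤ β)
    (hge : ∀ δ : ℝ, 0 < δ → ∀ᶠ β in 𝓝[>] 0, β ^ (1 + δ) ≤ P β) :
    Tendsto (fun β => log (P β) / log β) (𝓝[>] 0) (𝓝 1) := by
  have hsmall : ∀ᶠ β in 𝓝[>] (0 : ℝ), 0 < β ∧ β < 1 := Ioo_mem_nhdsGT one_pos
  refine tendsto_order.2 ⟨fun r hr => ?_, fun r hr => ?_⟩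
  · filter_upwards [hle, hge 1 one_pos, hsmall] with β hβle hβge ⟨h0, h1⟩
    rw [lt_div_iff_of_neg (log_neg h0 h1)]
    nlinarith [log_le_log (lt_of_lt_of_le (by positivity) hβge) hβle, log_neg h0 h1]
  · filter_upwards [hge ((r - 1) / 2) (by linarith), hsmall] with β hβ ⟨h0, h1⟩
    rw [div_lt_iff_of_neg (log_neg h0 h1)]
    have := log_le_log (by positivity) hβ
    rw [log_rpow h0] at this
    nlinarith [log_neg h0 h1]

theorem stmt5_general
    {Ω : Type*} [MeasurableSpace Ω] (μ : Measure Ω) [IsProbabilityMeasure μ]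
    (Z : Ω → ℝ) (hZ : Measurable Z)
    (hpos : ∀ u : ℝ, 0 < (μ {ω | u < Z ω}).toReal)
    (ρ α Istar : ℝ) (hρ : 0 < ρ) (hα : 0 < α) (hIstar : 0 < Istar)
    (Λ : ℝ → ℝ) (hΛpos : ∀ x : ℝ, 0 < x → 0 < Λ x)
    (hΛmono : ∃ x₀ : ℝ, StrictMonoOn Λ (Set.Ici x₀))
    (hΛRV : RegVary Λ α)
    (htail : Tendsto (fun u : ℝ => Real.log ((μ {ω | u < Z ω}).toReal) / Λ (u ^ (1 / ρ)))
      atTop (𝓝 (-Istar))) :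
    (∀ δ : ℝ, 0 < δ → ∃ β₀ : ℝ, 0 < β₀ ∧ ∀ β : ℝ, 0 < β → β < β₀ →
        β ^ (1 + δ) ≤ ∫ ω, (max (Z ω - VaR μ Z β) 0) ^ 2 ∂μ) ∧
    (∀ β : ℝ, 0 < β → β < 1 →
        (μ {ω | VaR μ Z β + 1 ≤ Z ω}).toReal ≤ ∫ ω, (max (Z ω - VaR μ Z β) 0) ^ 2 ∂μ) ∧
    Tendsto (fun β : ℝ => Real.log ((μ {ω | VaR μ Z β + 1 ≤ Z ω}).toReal) / Real.log β)
      (𝓝[>] (0 : ℝ)) (𝓝 1) := by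
  obtain ⟨x₀, hmono⟩ := hΛmono
  obtain ⟨c, hc, hΛc⟩ :=
    hΛRV.exists_rpow_le (γ := α / 2) (by positivity) (by linarith) hΛpos hmono.monotoneOn
  have hmoment : ∀ v, μ.real {ω | v + 1 ≤ Z ω} ≤ ∫ ω, (max (Z ω - v) 0) ^ 2 ∂μ := fun v =>
    measureReal_add_one_le_integral_sq hZ <| integrable_sq_max_sub_of_tail_le hZ
      (eventually_le_rpow_neg_of_tendsto_log_div hρ hIstar hc (by positivity) hpos hΛc htail 3) v
  have hlower : ∀ δ : ℝ, 0 < δ →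
      ∀ᶠ β in 𝓝[>] 0, β ^ (1 + δ) ≤ μ.real {ω | VaR μ Z β + 1 ≤ Z ω} := fun δ hδ =>
    eventually_rpow_le_measureReal_VaR_add_one hZ hpos hδ <|
      eventually_one_add_mul_log_le_log_shift hρ hα hIstar hΛpos hmono.monotoneOn hΛRV htail hδ
  have hupper : ∀ᶠ β in 𝓝[>] 0, μ.real {ω | VaR μ Z β + 1 ≤ Z ω} ≤ β := by
    filter_upwards [self_mem_nhdsWithin] with β hβ using measureReal_VaR_add_le hZ hβ one_pos
  refine ⟨fun δ hδ => ?_, fun β _ _ => hmoment _, tendsto_log_div_log_of_rpow_le hupper hlower⟩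
  obtain ⟨β₀, hβ₀, hsub⟩ := mem_nhdsGT_iff_exists_Ioo_subset.1 (hlower δ hδ)
  exact ⟨β₀, hβ₀, fun β h0 h1 => (hsub ⟨h0, h1⟩).trans (hmoment _)⟩

/-- the second moment of the excess loss satisfies
`E[((L(X) − v_β)^+)²] ≥ β^{1+δ}` eventually as `β → 0`; moreover it dominates
`P(L(X) ≥ v_β + 1)`, which equals `β^{1+o(1)}`. -/
theorem stmt5
    {Ω : Type*} [MeasurableSpace Ω] (μ : Measure Ω) [IsProbabilityMeasure μ]
    (Z : Ω → ℝ) (hZ : Measurable Z)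
    (hpos : ∀ u : ℝ, 0 < (μ {ω | u < Z ω}).toReal)
    (ρ α Istar : ℝ) (hρ : 0 < ρ) (hα : 0 < α) (hIstar : 0 < Istar)
    (Λ : ℝ → ℝ) (hΛpos : ∀ x : ℝ, 0 < x → 0 < Λ x)
    (hΛmono : ∃ x₀ : ℝ, StrictMonoOn Λ (Set.Ici x₀))
    (hΛtop : Tendsto Λ atTop atTop)
    (hΛRV : RegVary Λ α)
    (htail : Tendsto (fun u : ℝ => Real.log ((μ {ω | u < Z ω}).toReal) / Λ (u ^ (1 / ρ)))
      atTop (𝓝 (-Istar))) :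
    (∀ δ : ℝ, 0 < δ → ∃ β₀ : ℝ, 0 < β₀ ∧ ∀ β : ℝ, 0 < β → β < β₀ →
        β ^ (1 + δ) ≤ ∫ ω, (max (Z ω - VaR μ Z β) 0) ^ 2 ∂μ) ∧
    (∀ β : ℝ, 0 < β → β < 1 →
        (μ {ω | VaR μ Z β + 1 ≤ Z ω}).toReal ≤ ∫ ω, (max (Z ω - VaR μ Z β) 0) ^ 2 ∂μ) ∧
    Tendsto (fun β : ℝ => Real.log ((μ {ω | VaR μ Z β + 1 ≤ Z ω}).toReal) / Real.log β)
      (𝓝[>] (0 : ℝ)) (𝓝 1) :=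
  stmt5_general μ Z hZ hpos ρ α Istar hρ hα hIstar Λ hΛpos hΛmono hΛRV htail
end

section
/- Let d ≥ 1, ρ > 0 and r > 1. Define, for x ∈ (0,∞)^d, κ_i(x) = log(1+x_i) / (ρ max_{j=1,…,d} log(1+x_j)) and T(x) = (x_1 r^{κ_1(x)}, …, x_d r^{κ_d(x)}). Let x ∈ (0,∞)^d be a point at which the maximum max_j x_j is attained at a unique index. Then T is differentiable at x and the absolute value of the determinant of its derivative equals J(x) = [∏_{i=1}^d J̃_i(x)] · r^{Σ_{i=1}^d κ_i(x)} / max_{i=1,…,d} J̃_i(x), where J̃_i(x) = 1 + (ρ^{−1} log r / max_j log(1+x_j)) · (x_i/(1+x_i)). -/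
/-!
Near a point where the maximum coordinate is attained only at `i₀`, the normaliser
`max_j log (1 + y j)` equals `log (1 + y i₀)`, so `T` is a smooth map there. Its Jacobian matrix is
diagonal apart from the column `i₀`, with diagonal entries `r^{κ_i} J̃_i` for `i ≠ i₀`; at `(i₀, i₀)`
the contribution of the normaliser cancels the factor `J̃_{i₀}`, leaving `r^{κ_{i₀}}`. A matrix
whose off-diagonal entries all lie in one column has determinant the product of its diagonal, and
`J̃_{i₀} = max_i J̃_i` because `t ↦ t / (1 + t)` is increasing.
-/

open Filter Real Topology

theorem ciSup_eq_of_forall_le {ι α : Type*} [ConditionallyCompleteLattice α] {f : ι → α} {i : ι}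
    (h : ∀ j, f j ≤ f i) : ⨆ j, f j = f i :=
  haveI : Nonempty ι := ⟨i⟩
  le_antisymm (ciSup_le h) (le_ciSup ⟨f i, Set.forall_mem_range.2 h⟩ i)

theorem Matrix.det_eq_prod_diag_of_offDiag_mem_col {n R : Type*} [Fintype n] [DecidableEq n]
    [CommRing R] (M : Matrix n n R) (j : n) (hM : ∀ i k, k ≠ i → k ≠ j → M i k = 0) :
    M.det = ∏ i, M i i := by
  rw [det_apply', Finset.sum_eq_single 1 ?_ (by simp)]
  · simp
  intro σ _ hσ
  obtain ⟨i, hi, hij⟩ : ∃ i, σ i ≠ i ∧ i ≠ j := by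
    obtain ⟨i, hi⟩ := not_forall.1 (mt Equiv.ext hσ)
    by_cases hij : i = j
    · subst hij
      exact ⟨σ i, fun h => hi (σ.injective h), hi⟩
    · exact ⟨i, hi, hij⟩
  exact mul_eq_zero_of_right _ (Finset.prod_eq_zero (Finset.mem_univ i) (hM _ _ hi.symm hij))

namespace ContinuousLinearMap

variable {ι R : Type*} [CommRing R] [TopologicalSpace R] [IsTopologicalRing R]

def diagAddCol (a w : ι → R) (j : ι) : (ι → R) →L[R] (ι → R) :=
  pi fun i => a i • proj i + w i • proj j

@[simp]
theorem diagAddCol_apply (a w : ι → R) (j : ι) (v : ι → R) (i : ι) :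
    diagAddCol a w j v i = a i * v i + w i * v j := rfl

theorem det_diagAddCol [Fintype ι] [DecidableEq ι] (a w : ι → R) (j : ι) :
    (diagAddCol a w j).det = (a j + w j) * ∏ i ∈ Finset.univ.erase j, a i := by
  rw [det, ← LinearMap.det_toMatrix',
    Matrix.det_eq_prod_diag_of_offDiag_mem_col _ j fun i k hki hkj => by
      simp [LinearMap.toMatrix'_apply, hki.symm, hkj.symm],
    ← Finset.mul_prod_erase _ _ (Finset.mem_univ j)]
  congr 1
  · simp [LinearMap.toMatrix'_apply]
  · refine Finset.prod_congr rfl fun i hi => ?_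
    simp [LinearMap.toMatrix'_apply, Finset.ne_of_mem_erase hi]

end ContinuousLinearMap

namespace ImportanceSampling

variable {ι : Type*}

theorem iSup_log_one_add_eq {y : ι → ℝ} {i₀ : ι} (hy : ∀ j, -1 < y j) (hle : ∀ j, y j ≤ y i₀) :
    ⨆ j, log (1 + y j) = log (1 + y i₀) :=
  ciSup_eq_of_forall_le fun j => log_le_log (by linarith [hy j]) (by linarith [hle j])

theorem iSup_one_add_mul_div_one_add_eq {c : ℝ} (hc : 0 ≤ c) {y : ι → ℝ} {i₀ : ι}
    (hy : ∀ j, -1 < y j) (hle : ∀ j, y j ≤ y i₀) :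
    ⨆ j, 1 + c * (y j / (1 + y j)) = 1 + c * (y i₀ / (1 + y i₀)) := by
  refine ciSup_eq_of_forall_le fun j => ?_
  have hfrac : y j / (1 + y j) ≤ y i₀ / (1 + y i₀) := by
    rw [div_le_div_iff₀ (by linarith [hy j]) (by linarith [hy i₀])]
    linarith [hle j]
  linarith [mul_le_mul_of_nonneg_left hfrac hc]

variable [Fintype ι]

noncomputable def transform (ρ r : ℝ) (y : ι → ℝ) : ι → ℝ :=
  fun i => y i * r ^ (log (1 + y i) / (ρ * ⨆ j, log (1 + y j)))

noncomputable def transformAt (ρ r : ℝ) (i₀ : ι) (y : ι → ℝ) : ι → ℝ :=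
  fun i => y i * r ^ (log (1 + y i) / (ρ * log (1 + y i₀)))

theorem transform_eventuallyEq_transformAt (ρ r : ℝ) {x : ι → ℝ} {i₀ : ι} (hx : ∀ i, -1 < x i)
    (hmax : ∀ j, j ≠ i₀ → x j < x i₀) : transform ρ r =ᶠ[𝓝 x] transformAt ρ r i₀ := by
  have hnear : ∀ᶠ y in 𝓝 x, ∀ j, -1 < y j ∧ y j ≤ y i₀ := by
    refine eventually_all.2 fun j =>
      (((continuous_apply j).tendsto x).eventually_const_lt (hx j)).and ?_
    rcases eq_or_ne j i₀ with rfl | hj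
    · exact .of_forall fun _ => le_rfl
    · exact ((continuous_apply j).continuousAt.eventually_lt
        (continuous_apply i₀).continuousAt (hmax j hj)).mono fun _ => le_of_lt
  filter_upwards [hnear] with y hy
  unfold transform transformAt
  rw [iSup_log_one_add_eq (fun j => (hy j).1) (fun j => (hy j).2)]

/-- `κ_i(x)` when the maximum of `x` is attained at `i₀`. -/
noncomputable def kappa (ρ : ℝ) (x : ι → ℝ) (i₀ i : ι) : ℝ :=
  log (1 + x i) / (ρ * log (1 + x i₀))

/-- `J̃_i(x)` when the maximum of `x` is attained at `i₀`. -/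
noncomputable def jacobianFactor (ρ r : ℝ) (x : ι → ℝ) (i₀ i : ι) : ℝ :=
  1 + ρ⁻¹ * log r / log (1 + x i₀) * (x i / (1 + x i))

noncomputable def fderivTransformAt (ρ r : ℝ) (x : ι → ℝ) (i₀ : ι) :
    (ι → ℝ) →L[ℝ] (ι → ℝ) :=
  .diagAddCol (fun i => r ^ kappa ρ x i₀ i * jacobianFactor ρ r x i₀ i)
    (fun i => -(x i * r ^ kappa ρ x i₀ i * log r * kappa ρ x i₀ i / (log (1 + x i₀) * (1 + x i₀))))
    i₀

theorem hasFDerivAt_log_one_add_apply {x : ι → ℝ} (i : ι) (hx : 1 + x i ≠ 0) :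
    HasFDerivAt (fun y : ι → ℝ => log (1 + y i))
      ((1 + x i)⁻¹ • ContinuousLinearMap.proj (R := ℝ) i) x :=
  ((hasFDerivAt_apply i x).const_add 1).log hx

theorem hasFDerivAt_transformAt {ρ r : ℝ} (hρ : ρ ≠ 0) (hr : 0 < r) {x : ι → ℝ} {i₀ : ι}
    (hx : ∀ i, 1 + x i ≠ 0) (hL : log (1 + x i₀) ≠ 0) :
    HasFDerivAt (transformAt ρ r i₀) (fderivTransformAt ρ r x i₀) x := by
  refine hasFDerivAt_pi'.2 fun i => ?_
  have hinv := (hasDerivAt_inv (mul_ne_zero hρ hL)).comp_hasFDerivAt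
    (f := fun y : ι → ℝ => ρ * log (1 + y i₀)) x
    ((hasFDerivAt_log_one_add_apply i₀ (hx i₀)).const_mul ρ)
  have hpow := ((hasFDerivAt_log_one_add_apply i (hx i)).mul hinv).const_rpow hr
  refine ((hasFDerivAt_apply i x).mul hpow).congr_fderiv ?_
  ext v
  simp only [fderivTransformAt, kappa, jacobianFactor, ContinuousLinearMap.comp_apply,
    ContinuousLinearMap.diagAddCol_apply, add_apply,
    smul_apply, ContinuousLinearMap.proj_apply, Function.comp_apply,
    Pi.mul_apply, smul_eq_mul]
  field_simp
  ring

theorem abs_det_fderivTransformAt [DecidableEq ι] {ρ r : ℝ} (hρ : 0 < ρ) (hr : 1 < r)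
    {x : ι → ℝ} (hx : ∀ i, 0 < x i) {i₀ : ι} (hL : 0 < log (1 + x i₀)) :
    |(fderivTransformAt ρ r x i₀).det| =
      (∏ i, jacobianFactor ρ r x i₀ i) * r ^ (∑ i, kappa ρ x i₀ i) /
        jacobianFactor ρ r x i₀ i₀ := by
  have hJ : ∀ i, 0 < jacobianFactor ρ r x i₀ i := fun i => by
    have := log_pos hr
    have := hx i
    unfold jacobianFactor
    positivity
  -- the derivative of the normaliser cancels the factor `J̃_{i₀}` on the diagonal
  have hcol : r ^ kappa ρ x i₀ i₀ * jacobianFactor ρ r x i₀ i₀ -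
      x i₀ * r ^ kappa ρ x i₀ i₀ * log r * kappa ρ x i₀ i₀ / (log (1 + x i₀) * (1 + x i₀)) =
      r ^ kappa ρ x i₀ i₀ := by
    unfold kappa jacobianFactor
    field_simp
    ring
  have hr0 : 0 < r := by linarith
  rw [fderivTransformAt, ContinuousLinearMap.det_diagAddCol, ← sub_eq_add_neg, hcol,
    Finset.prod_mul_distrib, ← mul_assoc,
    Finset.mul_prod_erase _ (fun i => r ^ kappa ρ x i₀ i) (Finset.mem_univ i₀),
    ← rpow_sum_of_pos hr0, ← Finset.mul_prod_erase _ (jacobianFactor ρ r x i₀) (Finset.mem_univ i₀),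
    abs_of_pos (mul_pos (rpow_pos_of_pos hr0 _) (Finset.prod_pos fun i _ => hJ i)),
    eq_div_iff (hJ i₀).ne']
  ring

end ImportanceSampling

theorem stmt9_general
    (d : ℕ) (ρ r : ℝ) (hρ : 0 < ρ) (hr : 1 < r)
    (x : Fin d → ℝ) (hx : ∀ i, 0 < x i)
    (i₀ : Fin d) (hmax : ∀ j : Fin d, j ≠ i₀ → x j < x i₀) :
    ∃ D : (Fin d → ℝ) →L[ℝ] (Fin d → ℝ),
      HasFDerivAt
        (fun y : Fin d → ℝ => fun i : Fin d =>
          y i * r ^ (Real.log (1 + y i) / (ρ * ⨆ j, Real.log (1 + y j)))) D x ∧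
      |D.det| =
        (∏ i, (1 + (ρ⁻¹ * Real.log r / ⨆ j, Real.log (1 + x j)) * (x i / (1 + x i)))) *
          r ^ (∑ i, Real.log (1 + x i) / (ρ * ⨆ j, Real.log (1 + x j))) /
          (⨆ i, (1 + (ρ⁻¹ * Real.log r / ⨆ j, Real.log (1 + x j)) * (x i / (1 + x i)))) := by
  have hx₁ : ∀ i, -1 < x i := fun i => by linarith [hx i]
  have hle : ∀ j, x j ≤ x i₀ := fun j => by
    rcases eq_or_ne j i₀ with rfl | hj
    exacts [le_rfl, (hmax j hj).le]
  have hL : 0 < Real.log (1 + x i₀) := Real.log_pos (by linarith [hx i₀])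
  have hc : 0 ≤ ρ⁻¹ * Real.log r / Real.log (1 + x i₀) := by
    have := Real.log_pos hr
    positivity
  have hT := ImportanceSampling.hasFDerivAt_transformAt hρ.ne' (zero_lt_one.trans hr)
    (fun i => by linarith [hx i]) hL.ne'
  refine ⟨_, hT.congr_of_eventuallyEq
    (ImportanceSampling.transform_eventuallyEq_transformAt ρ r hx₁ hmax), ?_⟩
  rw [ImportanceSampling.iSup_log_one_add_eq hx₁ hle,
    ImportanceSampling.iSup_one_add_mul_div_one_add_eq hc hx₁ hle]
  exact ImportanceSampling.abs_det_fderivTransformAt hρ hr hx hL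

/-- at any point `x ∈ (0,∞)^d` where the maximum coordinate is
attained at a unique index, the IS transformation
`T(x) = (x_i r^{κ_i(x)})_i` with `κ_i(x) = log(1+x_i)/(ρ max_j log(1+x_j))`
is differentiable, and the absolute value of the determinant of its derivative
equals `J(x) = (∏_i J̃_i(x)) · r^{Σ_i κ_i(x)} / max_i J̃_i(x)`, where
`J̃_i(x) = 1 + (ρ⁻¹ log r / max_j log(1+x_j)) (x_i/(1+x_i))`. -/
theorem stmt9
    (d : ℕ) (hd : 1 ≤ d) (ρ r : ℝ) (hρ : 0 < ρ) (hr : 1 < r)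
    (x : Fin d → ℝ) (hx : ∀ i, 0 < x i)
    (i₀ : Fin d) (hmax : ∀ j : Fin d, j ≠ i₀ → x j < x i₀) :
    ∃ D : (Fin d → ℝ) →L[ℝ] (Fin d → ℝ),
      HasFDerivAt
        (fun y : Fin d → ℝ => fun i : Fin d =>
          y i * r ^ (Real.log (1 + y i) / (ρ * ⨆ j, Real.log (1 + y j)))) D x ∧
      |D.det| =
        (∏ i, (1 + (ρ⁻¹ * Real.log r / ⨆ j, Real.log (1 + x j)) * (x i / (1 + x i)))) *
          r ^ (∑ i, Real.log (1 + x i) / (ρ * ⨆ j, Real.log (1 + x j))) /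
          (⨆ i, (1 + (ρ⁻¹ * Real.log r / ⨆ j, Real.log (1 + x j)) * (x i / (1 + x i)))) :=
  stmt9_general d ρ r hρ hr x hx i₀ hmax
end

section
/- Suppose the real random variable L(X) satisfies the tail asymptotic lim_{u→∞} log P(L(X) > u) / Λ(u^{1/ρ}) = −I* with I* > 0, where Λ:(0,∞)→(0,∞) is eventually strictly increasing, Λ(x) → ∞, and Λ ∈ RV(α) for some α > 0. Fix h > 0 and set r_β = h log log(1/β). Then r_β → ∞ and r_β / v_β → 0 as β → 0, where v_β is the value at risk at level β. -/
open MeasureTheory Filter Real Topology ProbabilityTheory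

/-- A regularly varying, eventually monotone, positive function grows at most
polynomially.  Proved by a doubling argument. -/
lemma rv_poly_bound (Λ : ℝ → ℝ) (α : ℝ) (hα : 0 < α)
    (hΛpos : ∀ x : ℝ, 0 < x → 0 < Λ x) (x₀ : ℝ) (hmono : StrictMonoOn Λ (Set.Ici x₀))
    (hRV : RegVary Λ α) :
    ∃ C > 0, ∃ x₁ ≥ 1, ∀ x ≥ x₁, Λ x ≤ C * x ^ (α + 1) := by
  have h2 : Tendsto (fun t => Λ (t * 2) / Λ t) atTop (𝓝 ((2 : ℝ) ^ α)) := hRV 2 two_pos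
  have hlt : (2 : ℝ) ^ α < 2 ^ (α + 1) :=
    (Real.rpow_lt_rpow_left_iff (by norm_num : (1:ℝ) < 2)).mpr (by linarith)
  obtain ⟨t₀, ht₀⟩ := eventually_atTop.mp (h2.eventually (eventually_lt_nhds hlt))
  set t₁ : ℝ := max t₀ (max x₀ 1) with ht₁def
  have ht₁1 : (1 : ℝ) ≤ t₁ := le_max_of_le_right (le_max_right _ _)
  have ht₁0 : (0 : ℝ) < t₁ := lt_of_lt_of_le one_pos ht₁1
  have ht₁x₀ : x₀ ≤ t₁ := le_max_of_le_right (le_max_left _ _)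
  have ht₁t₀ : t₀ ≤ t₁ := le_max_left _ _
  have hD0 : (0 : ℝ) < 2 ^ (α + 1) := Real.rpow_pos_of_pos two_pos _
  have hdouble : ∀ t, t₁ ≤ t → Λ (t * 2) ≤ 2 ^ (α + 1) * Λ t := by
    intro t ht
    have hq := ht₀ t (le_trans ht₁t₀ ht)
    have hΛt : 0 < Λ t := hΛpos t (lt_of_lt_of_le ht₁0 ht)
    have := mul_le_mul_of_nonneg_right hq.le hΛt.le
    rwa [div_mul_cancel₀ _ hΛt.ne'] at this
  have hiter : ∀ n : ℕ, Λ (2 ^ n * t₁) ≤ ((2:ℝ) ^ (α + 1)) ^ n * Λ t₁ := by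
    intro n
    induction n with
    | zero => simp
    | succ n ih =>
      have hpow1 : (1 : ℝ) ≤ 2 ^ n := one_le_pow₀ one_le_two
      have h1 : t₁ ≤ 2 ^ n * t₁ := le_mul_of_one_le_left ht₁0.le hpow1
      have hstep := hdouble _ h1
      have heq : (2:ℝ) ^ (n + 1) * t₁ = (2 ^ n * t₁) * 2 := by ring
      calc Λ (2 ^ (n + 1) * t₁) = Λ ((2 ^ n * t₁) * 2) := by rw [heq]
        _ ≤ 2 ^ (α + 1) * Λ (2 ^ n * t₁) := hstep
        _ ≤ 2 ^ (α + 1) * (((2:ℝ) ^ (α + 1)) ^ n * Λ t₁) :=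
            mul_le_mul_of_nonneg_left ih hD0.le
        _ = ((2:ℝ) ^ (α + 1)) ^ (n + 1) * Λ t₁ := by ring
  refine ⟨(2 / t₁) ^ (α + 1) * Λ t₁,
    mul_pos (Real.rpow_pos_of_pos (div_pos two_pos ht₁0) _) (hΛpos t₁ ht₁0), t₁, ht₁1, ?_⟩
  intro x hx
  have hx0 : (0 : ℝ) < x := lt_of_lt_of_le ht₁0 hx
  have hx1 : (1 : ℝ) ≤ x / t₁ := (one_le_div ht₁0).mpr hx
  set n : ℕ := ⌈Real.logb 2 (x / t₁)⌉₊ with hn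
  have hlb0 : 0 ≤ Real.logb 2 (x / t₁) := Real.logb_nonneg (by norm_num) hx1
  have hxt0 : (0 : ℝ) < x / t₁ := div_pos hx0 ht₁0
  have h2n : x / t₁ ≤ (2:ℝ) ^ (n : ℝ) := by
    calc x / t₁ = (2:ℝ) ^ Real.logb 2 (x / t₁) :=
          (Real.rpow_logb two_pos (by norm_num) hxt0).symm
      _ ≤ (2:ℝ) ^ (n : ℝ) :=
          Real.rpow_le_rpow_left_iff (by norm_num) |>.mpr (Nat.le_ceil _)
  have h2n' : (2:ℝ) ^ (n : ℝ) ≤ 2 * (x / t₁) := by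
    have hle : (n : ℝ) ≤ Real.logb 2 (x / t₁) + 1 := (Nat.ceil_lt_add_one hlb0).le
    calc (2:ℝ) ^ (n : ℝ) ≤ (2:ℝ) ^ (Real.logb 2 (x / t₁) + 1) :=
          Real.rpow_le_rpow_left_iff (by norm_num) |>.mpr hle
      _ = (2:ℝ) ^ Real.logb 2 (x / t₁) * (2:ℝ) ^ (1:ℝ) := Real.rpow_add two_pos _ _
      _ = (x / t₁) * 2 := by rw [Real.rpow_logb two_pos (by norm_num) hxt0, Real.rpow_one]
      _ = 2 * (x / t₁) := mul_comm _ _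
  have hxle : x ≤ 2 ^ n * t₁ := by
    have := (div_le_iff₀ ht₁0).mp h2n
    rwa [Real.rpow_natCast] at this
  have hmem1 : x ∈ Set.Ici x₀ := le_trans ht₁x₀ hx
  have hmem2 : (2:ℝ) ^ n * t₁ ∈ Set.Ici x₀ := le_trans ht₁x₀ (le_trans hx hxle)
  have hα1 : (0:ℝ) ≤ α + 1 := by linarith
  calc Λ x ≤ Λ (2 ^ n * t₁) := hmono.monotoneOn hmem1 hmem2 hxle
    _ ≤ ((2:ℝ) ^ (α + 1)) ^ n * Λ t₁ := hiter n
    _ = ((2:ℝ) ^ (n : ℝ)) ^ (α + 1) * Λ t₁ := by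
        rw [← Real.rpow_natCast ((2:ℝ) ^ (α+1)) n, ← Real.rpow_mul (by norm_num : (0:ℝ) ≤ 2),
          mul_comm (α+1) (n:ℝ), Real.rpow_mul (by norm_num : (0:ℝ) ≤ 2)]
    _ ≤ (2 * (x / t₁)) ^ (α + 1) * Λ t₁ := by
        refine mul_le_mul_of_nonneg_right ?_ (hΛpos t₁ ht₁0).le
        exact Real.rpow_le_rpow (Real.rpow_nonneg (by norm_num) _) h2n' hα1
    _ = (2 / t₁) ^ (α + 1) * Λ t₁ * x ^ (α + 1) := by
        rw [show 2 * (x / t₁) = (2 / t₁) * x by ring,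
          Real.mul_rpow (by positivity) hx0.le]
        ring

/-- Lower bound on the value at risk: if the survival probability at `u`
strictly exceeds `β` (and is at most `β` somewhere), then `u ≤ VaR`. -/
lemma var_lower {Ω : Type*} [MeasurableSpace Ω] (μ : Measure Ω) [IsProbabilityMeasure μ]
    (Z : Ω → ℝ) (hZ : Measurable Z) {β u u' : ℝ}
    (hb : β < (μ {ω | u < Z ω}).toReal) (hb' : (μ {ω | u' < Z ω}).toReal ≤ β) :
    u ≤ VaR μ Z β := by
  have key : ∀ v : ℝ, (μ {ω | Z ω ≤ v}).toReal = 1 - (μ {ω | v < Z ω}).toReal := by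
    intro v
    have hs : MeasurableSet {ω | Z ω ≤ v} := measurableSet_le hZ measurable_const
    have hc : {ω | Z ω ≤ v}ᶜ = {ω | v < Z ω} := by ext ω; simp [not_le]
    have hcompl := prob_compl_eq_one_sub (μ := μ) hs
    rw [hc] at hcompl
    have h1 : (μ {ω | v < Z ω}).toReal = 1 - (μ {ω | Z ω ≤ v}).toReal := by
      rw [hcompl, ENNReal.toReal_sub_of_le prob_le_one ENNReal.one_ne_top, ENNReal.toReal_one]
    linarith
  have hne : (Set.Nonempty {v : ℝ | 1 - β ≤ (μ {ω | Z ω ≤ v}).toReal}) := by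
    refine ⟨u', ?_⟩
    rw [Set.mem_setOf_eq, key u']
    linarith
  refine le_csInf hne ?_
  intro b hbmem
  rw [Set.mem_setOf_eq] at hbmem
  by_contra hlt
  push_neg at hlt
  have hmono : (μ {ω | Z ω ≤ b}).toReal ≤ (μ {ω | Z ω ≤ u}).toReal := by
    refine ENNReal.toReal_mono (measure_ne_top μ _) (measure_mono ?_)
    intro ω hw
    exact le_trans hw hlt.le
  rw [key u] at hmono
  linarith

/-- with `r_β = h log log(1/β)`, one has `r_β → ∞` and
`r_β / v_β → 0` as `β → 0`. -/
theorem stmt12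
    {Ω : Type*} [MeasurableSpace Ω] (μ : Measure Ω) [IsProbabilityMeasure μ]
    (Z : Ω → ℝ) (hZ : Measurable Z)
    (hpos : ∀ u : ℝ, 0 < (μ {ω | u < Z ω}).toReal)
    (ρ α Istar : ℝ) (hρ : 0 < ρ) (hα : 0 < α) (hIstar : 0 < Istar)
    (Λ : ℝ → ℝ) (hΛpos : ∀ x : ℝ, 0 < x → 0 < Λ x)
    (hΛmono : ∃ x₀ : ℝ, StrictMonoOn Λ (Set.Ici x₀))
    (hΛtop : Tendsto Λ atTop atTop)
    (hΛRV : RegVary Λ α)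
    (htail : Tendsto (fun u : ℝ => Real.log ((μ {ω | u < Z ω}).toReal) / Λ (u ^ (1 / ρ)))
      atTop (𝓝 (-Istar)))
    (h : ℝ) (hh : 0 < h) :
    Tendsto (fun β : ℝ => h * Real.log (Real.log (1 / β))) (𝓝[>] (0 : ℝ)) atTop ∧
    Tendsto (fun β : ℝ => h * Real.log (Real.log (1 / β)) / VaR μ Z β)
      (𝓝[>] (0 : ℝ)) (𝓝 0) := by
  obtain ⟨x₀, hmono⟩ := hΛmono
  obtain ⟨C, hC, x₁, hx₁, hpoly⟩ := rv_poly_bound Λ α hα hΛpos x₀ hmono hΛRV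
  set G : ℝ → ℝ := fun u => (μ {ω | u < Z ω}).toReal with hGdef
  -- log(1/β) → ∞
  have hT : Tendsto (fun β : ℝ => Real.log (1 / β)) (𝓝[>] (0:ℝ)) atTop := by
    have h1 : Tendsto (fun β : ℝ => (1:ℝ) / β) (𝓝[>] (0:ℝ)) atTop :=
      tendsto_inv_nhdsGT_zero.congr (fun β => (one_div β).symm)
    exact Real.tendsto_log_atTop.comp h1
  have hr1 : Tendsto (fun β : ℝ => h * Real.log (Real.log (1 / β))) (𝓝[>] (0:ℝ)) atTop := by
    have := Real.tendsto_log_atTop.comp hT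
    exact Tendsto.const_mul_atTop hh this
  refine ⟨hr1, ?_⟩
  -- Λ(u^(1/ρ)) → ∞
  have hΛc : Tendsto (fun u : ℝ => Λ (u ^ (1 / ρ))) atTop atTop :=
    hΛtop.comp (tendsto_rpow_atTop (by positivity))
  -- log G → -∞ and G → 0
  have hlogG : Tendsto (fun u => Real.log (G u)) atTop atBot := by
    have hmul : Tendsto (fun u : ℝ => (Real.log (G u) / Λ (u ^ (1 / ρ))) * Λ (u ^ (1 / ρ)))
        atTop atBot := Tendsto.neg_mul_atTop (by linarith) htail hΛc
    refine hmul.congr' ?_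
    filter_upwards [hΛc.eventually (eventually_gt_atTop 0)] with u hu
    rw [div_mul_cancel₀ _ hu.ne']
  have hGto0 : Tendsto G atTop (𝓝 0) := by
    have := Real.tendsto_exp_atBot.comp hlogG
    exact this.congr (fun u => Real.exp_log (hpos u))
  -- tail lower bound
  have htail2 : ∀ᶠ u in atTop, -(2 * Istar) * Λ (u ^ (1 / ρ)) < Real.log (G u) := by
    have h1 : ∀ᶠ u in atTop, -(2 * Istar) < Real.log (G u) / Λ (u ^ (1 / ρ)) :=
      htail.eventually (eventually_gt_nhds (by linarith))
    filter_upwards [h1, hΛc.eventually (eventually_gt_atTop 0)] with u h1 h2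
    have := mul_lt_mul_of_pos_right h1 h2
    rwa [div_mul_cancel₀ _ h2.ne'] at this
  obtain ⟨u₂, hu₂⟩ := eventually_atTop.mp htail2
  set A : ℝ := 4 * Istar * C with hAdef
  have hA : 0 < A := by positivity
  set γ : ℝ := (α + 1) / ρ with hγdef
  have hγ : 0 < γ := by positivity
  -- thresholds in t
  have huT : Tendsto (fun t : ℝ => (t / A) ^ (1 / γ)) atTop atTop :=
    (tendsto_rpow_atTop (by positivity)).comp (tendsto_id.atTop_div_const hA)
  have huT2 : Tendsto (fun t : ℝ => ((t / A) ^ (1 / γ)) ^ (1 / ρ)) atTop atTop :=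
    (tendsto_rpow_atTop (by positivity)).comp huT
  have hMev : ∀ᶠ t : ℝ in atTop,
      u₂ ≤ (t / A) ^ (1 / γ) ∧ x₁ ≤ ((t / A) ^ (1 / γ)) ^ (1 / ρ) ∧ 1 ≤ t := by
    filter_upwards [huT.eventually_ge_atTop u₂, huT2.eventually_ge_atTop x₁,
      eventually_ge_atTop 1] with t a b c
    exact ⟨a, b, c⟩
  -- the key eventual bound: VaR ≥ u(β) := (log(1/β)/A)^(1/γ)
  have hkey : ∀ᶠ β : ℝ in 𝓝[>] (0:ℝ),
      0 < (Real.log (1 / β) / A) ^ (1 / γ) ∧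
      (Real.log (1 / β) / A) ^ (1 / γ) ≤ VaR μ Z β ∧
      0 ≤ h * Real.log (Real.log (1 / β)) := by
    filter_upwards [hT.eventually hMev, self_mem_nhdsWithin] with β hM hβ
    rw [Set.mem_Ioi] at hβ
    obtain ⟨hMu₂, hMx₁, hMt1⟩ := hM
    set t : ℝ := Real.log (1 / β) with htdef
    have ht0 : (0:ℝ) < t := lt_of_lt_of_le one_pos hMt1
    set u : ℝ := (t / A) ^ (1 / γ) with hudef
    have hu0 : 0 < u := Real.rpow_pos_of_pos (div_pos ht0 hA) _
    -- Λ bound at u^(1/ρ)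
    have hugamma : u ^ γ = t / A := by
      rw [hudef, ← Real.rpow_mul (div_pos ht0 hA).le, one_div_mul_cancel hγ.ne', Real.rpow_one]
    have hΛbound : Λ (u ^ (1 / ρ)) ≤ C * (t / A) := by
      have h1 := hpoly _ hMx₁
      have h2 : (u ^ (1 / ρ)) ^ (α + 1) = u ^ γ := by
        rw [← Real.rpow_mul hu0.le, show 1 / ρ * (α + 1) = γ by rw [hγdef]; ring]
      rw [h2, hugamma] at h1
      exact h1
    -- β < G u
    have hlogβ : Real.log β = -t := by
      rw [htdef, one_div, Real.log_inv, neg_neg]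
    have hβG : β < G u := by
      have hlow := hu₂ u hMu₂
      have hstep : -(2 * Istar) * Λ (u ^ (1 / ρ)) ≥ -(t / 2) := by
        have := mul_le_mul_of_nonneg_left hΛbound (by linarith : (0:ℝ) ≤ 2 * Istar)
        have heq : 2 * Istar * (C * (t / A)) = t / 2 := by
          rw [hAdef]; field_simp; ring
        rw [heq] at this
        nlinarith
      have hloglt : Real.log β < Real.log (G u) := by
        rw [hlogβ]; nlinarith
      calc β = Real.exp (Real.log β) := (Real.exp_log hβ).symm
        _ < Real.exp (Real.log (G u)) := Real.exp_lt_exp.mpr hloglt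
        _ = G u := Real.exp_log (hpos u)
    -- nonemptiness witness
    obtain ⟨u', hu'⟩ := (hGto0.eventually (eventually_lt_nhds hβ)).exists
    have hVaR : u ≤ VaR μ Z β := var_lower μ Z hZ hβG hu'.le
    refine ⟨hu0, hVaR, ?_⟩
    have : 0 ≤ Real.log t := Real.log_nonneg hMt1
    positivity
  -- squeeze
  have hg : Tendsto (fun t : ℝ => h * Real.log t / ((t / A) ^ (1 / γ))) atTop (𝓝 0) := by
    have hlo : (fun t : ℝ => h * Real.log t) =o[atTop] (fun t : ℝ => t ^ (1 / γ)) :=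
      (isLittleO_log_rpow_atTop (by positivity : (0:ℝ) < 1 / γ)).const_mul_left h
    have heq : (fun t : ℝ => t ^ (1 / γ)) =ᶠ[atTop]
        (fun t : ℝ => A ^ (1 / γ) * (t / A) ^ (1 / γ)) := by
      filter_upwards [eventually_ge_atTop (0:ℝ)] with t ht
      rw [Real.div_rpow ht hA.le]
      field_simp
    have hlo2 : (fun t : ℝ => h * Real.log t) =o[atTop]
        (fun t : ℝ => A ^ (1 / γ) * (t / A) ^ (1 / γ)) := hlo.trans_eventuallyEq heq
    have hlo3 : (fun t : ℝ => h * Real.log t) =o[atTop] (fun t : ℝ => (t / A) ^ (1 / γ)) :=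
      (Asymptotics.isLittleO_const_mul_right_iff
        (Real.rpow_pos_of_pos hA _).ne').mp hlo2
    exact hlo3.tendsto_div_nhds_zero
  have hgcomp : Tendsto (fun β : ℝ =>
      h * Real.log (Real.log (1 / β)) / ((Real.log (1 / β) / A) ^ (1 / γ)))
      (𝓝[>] (0:ℝ)) (𝓝 0) := hg.comp hT
  refine squeeze_zero' ?_ ?_ hgcomp
  · filter_upwards [hkey] with β ⟨hu0, hVaR, hr0⟩
    exact div_nonneg hr0 (le_trans hu0.le hVaR)
  · filter_upwards [hkey] with β ⟨hu0, hVaR, hr0⟩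
    exact div_le_div_of_nonneg_left hr0 hu0 hVaR
end
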